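/- Soundness of N(LTL∇) with respect to LTL: for every set Λ of LTL-formulas and every LTL-formula A, if Λ ⊢LTL A (i.e., there is a label b and an N(LTL∇)-derivation of b:A* whose open assumptions are all of the form b:B* with B ∈ Λ), then Λ ⊨LTL A (i.e., every LTL-model making every formula of Λ true at all natural numbers makes A true at all natural numbers). -/
import Mathlib


/-! ## LTL∇-formulas: `A ::= p | ⊥ | A ⊃ A | G A | X A | ∇ A` -/
inductive NablaFormula (P : Type) : Type
  | atom  : P → NablaFormula P
  | bot   : NablaFormula P
  | imp   : NablaFormula P → NablaFormula P → NablaFormula P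
  | G     : NablaFormula P → NablaFormula P
  | X     : NablaFormula P → NablaFormula P
  | nabla : NablaFormula P → NablaFormula P

namespace NablaFormula
variable {P : Type}
/-- `¬A ≡ A ⊃ ⊥` -/
def neg (A : NablaFormula P) : NablaFormula P := imp A bot
/-- `A ∨ B ≡ ¬A ⊃ B` -/
def or (A B : NablaFormula P) : NablaFormula P := imp (neg A) B
/-- `A ∧ B ≡ ¬(¬A ∨ ¬B)` -/
def and (A B : NablaFormula P) : NablaFormula P := neg (or (neg A) (neg B))
/-- `F A ≡ ¬G¬A` -/
def F (A : NablaFormula P) : NablaFormula P := neg (G (neg A))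
end NablaFormula

/-- Truth of an LTL∇-formula at an observation sequence, in the LTL-model given by
the valuation `V : ℕ → P → Prop` (the time structure is the standard structure of ℕ).
A nonempty observation sequence `[n_0, …, n_k]` is represented *in reverse* by its
last element `n = n_k` together with the reversed remainder `ρ = [n_{k-1}, …, n_0]`;
thus `NablaSat V A n ρ` means `M, [n_0, …, n_{k-1}, n] ⊨∇ A`. -/
def NablaSat {P : Type} (V : ℕ → P → Prop) : NablaFormula P → ℕ → List ℕ → Prop
  | .atom p, n, _ => V n p
  | .bot, _, _ => False
  | .imp A B, n, ρ => NablaSat V A n ρ → NablaSat V B n ρ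
  | .G A, n, ρ => ∀ m, n ≤ m → NablaSat V A m (n :: ρ)
  | .X A, n, ρ => NablaSat V A (n + 1) (n :: ρ)
  | .nabla A, n, [] => NablaSat V A n []
  | .nabla A, n, n' :: ρ => ∀ m, n' ≤ m → m ≤ n → NablaSat V A m (n' :: ρ)

/-! ## LTL-formulas: `A ::= p | ⊥ | A ⊃ A | G A | X A | A U B` -/
inductive LTLFormula (P : Type) : Type
  | atom : P → LTLFormula P
  | bot  : LTLFormula P
  | imp  : LTLFormula P → LTLFormula P → LTLFormula P
  | G    : LTLFormula P → LTLFormula P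
  | X    : LTLFormula P → LTLFormula P
  | U    : LTLFormula P → LTLFormula P → LTLFormula P

namespace LTLFormula
variable {P : Type}
def neg (A : LTLFormula P) : LTLFormula P := imp A bot
def or (A B : LTLFormula P) : LTLFormula P := imp (neg A) B
def and (A B : LTLFormula P) : LTLFormula P := neg (or (neg A) (neg B))
def F (A : LTLFormula P) : LTLFormula P := neg (G (neg A))
def iff (A B : LTLFormula P) : LTLFormula P := and (imp A B) (imp B A)
end LTLFormula

/-- Standard LTL truth at a time instant `n` in the model with valuation `V`. -/
def LTLSat {P : Type} (V : ℕ → P → Prop) : LTLFormula P → ℕ → Prop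
  | .atom p, n => V n p
  | .bot, _ => False
  | .imp A B, n => LTLSat V A n → LTLSat V B n
  | .G A, n => ∀ m, n ≤ m → LTLSat V A m
  | .X A, n => LTLSat V A (n + 1)
  | .U A B, n => ∃ n', n ≤ n' ∧ LTLSat V B n' ∧ ∀ m, n ≤ m → m < n' → LTLSat V A m

/-- The translation `(·)*` from LTL into LTL∇:
`(A U B)* = B* ∨ (F (X B* ∧ ∇ A*))`. -/
def trNabla {P : Type} : LTLFormula P → NablaFormula P
  | .atom p => .atom p
  | .bot => .bot
  | .imp A B => .imp (trNabla A) (trNabla B)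
  | .G A => .G (trNabla A)
  | .X A => .X (trNabla A)
  | .U A B => NablaFormula.or (trNabla B)
      (NablaFormula.F (NablaFormula.and (.X (trNabla B)) (.nabla (trNabla A))))

/-! ## LTL^l- and LTL^{l∇}-formulas (mutual grammar) -/
mutual
  /-- LTL^l-formulas: `A^l ::= p | ⊥ | A^l ⊃ A^l | G A^∇ | X A^∇`. -/
  inductive IsLocal {P : Type} : NablaFormula P → Prop
    | atom (p : P) : IsLocal (.atom p)
    | bot : IsLocal .bot
    | imp {A B : NablaFormula P} : IsLocal A → IsLocal B → IsLocal (.imp A B)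
    | G {A : NablaFormula P} : IsHist A → IsLocal (.G A)
    | X {A : NablaFormula P} : IsHist A → IsLocal (.X A)
  /-- LTL^{l∇}-formulas: `A^∇ ::= A^l | A^∇ ⊃ A^∇ | ∇ A^∇`. -/
  inductive IsHist {P : Type} : NablaFormula P → Prop
    | ofLocal {A : NablaFormula P} : IsLocal A → IsHist A
    | imp {A B : NablaFormula P} : IsHist A → IsHist B → IsHist (.imp A B)
    | nabla {A : NablaFormula P} : IsHist A → IsHist (.nabla A)
end

/-! ## The labeled natural deduction system N(LTL∇).
Labels are natural numbers (a denumerable set). A labeled formula `α : A` with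
`α = b_0 … b_{k-1} b` is represented in reverse, as the last label `b` together
with the reversed prefix `ρ = [b_{k-1}, …, b_0]`. -/

/-- Generic (labeled or relational) formulas. -/
inductive GenForm (P : Type) : Type
  | lab : ℕ → List ℕ → NablaFormula P → GenForm P  -- `lab b ρ A` is `(ρ.reverse)b : A`
  | le  : ℕ → ℕ → GenForm P                         -- `b ⩽ c`
  | lt  : ℕ → ℕ → GenForm P                         -- `b ◁ c` (immediate successor)

/-- The labels occurring in a generic formula. -/
def GenForm.labels {P : Type} : GenForm P → Set ℕ
  | .lab b ρ _ => insert b {x | x ∈ ρ}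
  | .le b c => {b, c}
  | .lt b c => {b, c}

/-- `x` does not occur in any formula of `Φ`. -/
def FreshIn {P : Type} (x : ℕ) (Φ : Set (GenForm P)) : Prop :=
  ∀ ψ ∈ Φ, x ∉ ψ.labels

/-- Substitution `φ[c/b]` of the label `c` for the label `b`: `φ.subst b c`. -/
def GenForm.subst {P : Type} : GenForm P → ℕ → ℕ → GenForm P
  | .lab d ρ A, b, c => .lab (if d = b then c else d) (ρ.map fun x => if x = b then c else x) A
  | .le d e, b, c => .le (if d = b then c else d) (if e = b then c else e)
  | .lt d e, b, c => .lt (if d = b then c else d) (if e = b then c else e)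

/-- Derivability in N(LTL∇): `Deriv Φ φ` means that there is a derivation of `φ`
whose open assumptions are all contained in `Φ`. -/
inductive Deriv {P : Type} : Set (GenForm P) → GenForm P → Prop
  | assume {Φ : Set (GenForm P)} {φ} : φ ∈ Φ → Deriv Φ φ
  | botE {Φ : Set (GenForm P)} {b₁ b₂ ρ₁ ρ₂ A} :
      Deriv (insert (.lab b₁ ρ₁ (A.imp .bot)) Φ) (.lab b₂ ρ₂ .bot) →
      Deriv Φ (.lab b₁ ρ₁ A)
  | impI {Φ : Set (GenForm P)} {b ρ A B} :
      Deriv (insert (.lab b ρ A) Φ) (.lab b ρ B) →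
      Deriv Φ (.lab b ρ (A.imp B))
  | impE {Φ : Set (GenForm P)} {b ρ A B} :
      Deriv Φ (.lab b ρ (A.imp B)) → Deriv Φ (.lab b ρ A) → Deriv Φ (.lab b ρ B)
  | GI {Φ : Set (GenForm P)} {b₁ b₂ ρ A} :
      Deriv (insert (.le b₁ b₂) Φ) (.lab b₂ (b₁ :: ρ) A) →
      b₂ ≠ b₁ → b₂ ∉ ρ → FreshIn b₂ Φ →
      Deriv Φ (.lab b₁ ρ (.G A))
  | GE {Φ : Set (GenForm P)} {b₁ b₂ ρ A} :
      Deriv Φ (.lab b₁ ρ (.G A)) → Deriv Φ (.le b₁ b₂) →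
      Deriv Φ (.lab b₂ (b₁ :: ρ) A)
  | XI {Φ : Set (GenForm P)} {b₁ b₂ ρ A} :
      Deriv (insert (.lt b₁ b₂) Φ) (.lab b₂ (b₁ :: ρ) A) →
      b₂ ≠ b₁ → b₂ ∉ ρ → FreshIn b₂ Φ →
      Deriv Φ (.lab b₁ ρ (.X A))
  | XE {Φ : Set (GenForm P)} {b₁ b₂ ρ A} :
      Deriv Φ (.lab b₁ ρ (.X A)) → Deriv Φ (.lt b₁ b₂) →
      Deriv Φ (.lab b₂ (b₁ :: ρ) A)
  | nablaI {Φ : Set (GenForm P)} {b₁ b₂ b₃ ρ A} :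
      Deriv (insert (.le b₁ b₂) (insert (.le b₂ b₃) Φ)) (.lab b₂ (b₁ :: ρ) A) →
      b₂ ≠ b₁ → b₂ ≠ b₃ → b₂ ∉ ρ → FreshIn b₂ Φ →
      Deriv Φ (.lab b₃ (b₁ :: ρ) (.nabla A))
  | nablaE {Φ : Set (GenForm P)} {b₁ b₂ b₃ ρ A} :
      Deriv Φ (.lab b₃ (b₁ :: ρ) (.nabla A)) →
      Deriv Φ (.le b₁ b₂) → Deriv Φ (.le b₂ b₃) →
      Deriv Φ (.lab b₂ (b₁ :: ρ) A)
  | last {Φ : Set (GenForm P)} {b ρ ρ' A} :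
      Deriv Φ (.lab b ρ' A) → IsLocal A →
      Deriv Φ (.lab b ρ A)
  | serLt {Φ : Set (GenForm P)} {b₁ b₂ b ρ A} :
      Deriv (insert (.lt b₁ b₂) Φ) (.lab b ρ A) →
      b₂ ≠ b₁ → b₂ ≠ b → b₂ ∉ ρ → FreshIn b₂ Φ →
      Deriv Φ (.lab b ρ A)
  | linLt {Φ : Set (GenForm P)} {b₁ b₂ b₃ φ b ρ A} :
      Deriv Φ (.lt b₁ b₂) → Deriv Φ (.lt b₁ b₃) → Deriv Φ φ →
      Deriv (insert (φ.subst b₂ b₃) Φ) (.lab b ρ A) →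
      Deriv Φ (.lab b ρ A)
  | reflLe {Φ : Set (GenForm P)} {b₁ b ρ A} :
      Deriv (insert (.le b₁ b₁) Φ) (.lab b ρ A) →
      Deriv Φ (.lab b ρ A)
  | transLe {Φ : Set (GenForm P)} {b₁ b₂ b₃ b ρ A} :
      Deriv Φ (.le b₁ b₂) → Deriv Φ (.le b₂ b₃) →
      Deriv (insert (.le b₁ b₃) Φ) (.lab b ρ A) →
      Deriv Φ (.lab b ρ A)
  | eqLe {Φ : Set (GenForm P)} {b₁ b₂ ρ A} :
      Deriv Φ (.le b₁ b₂) → Deriv Φ (.le b₂ b₁) →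
      Deriv Φ (.lab b₁ ρ A) →
      Deriv Φ (.lab b₂ ρ A)
  | splitLe {Φ : Set (GenForm P)} {b₁ b₂ b' φ b ρ A} :
      Deriv Φ (.le b₁ b₂) → Deriv Φ φ →
      Deriv (insert (φ.subst b₁ b₂) Φ) (.lab b ρ A) →
      Deriv (insert (.lt b₁ b') (insert (.le b' b₂) Φ)) (.lab b ρ A) →
      b' ≠ b₁ → b' ≠ b₂ → b' ≠ b → b' ∉ ρ → FreshIn b' Φ →
      Deriv Φ (.lab b ρ A)
  | baseLe {Φ : Set (GenForm P)} {b₁ b₂ b ρ A} :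
      Deriv Φ (.lt b₁ b₂) →
      Deriv (insert (.le b₁ b₂) Φ) (.lab b ρ A) →
      Deriv Φ (.lab b ρ A)
  | ind {Φ : Set (GenForm P)} {b₀ b bi bj ρ A} :
      Deriv Φ (.lab b₀ ρ A) → Deriv Φ (.le b₀ b) →
      Deriv (insert (.le b₀ bi) (insert (.lt bi bj) (insert (.lab bi ρ A) Φ)))
        (.lab bj ρ A) →
      bi ≠ bj → bi ≠ b → bi ≠ b₀ → bi ∉ ρ → FreshIn bi Φ →
      bj ≠ b → bj ≠ b₀ → bj ∉ ρ → FreshIn bj Φ →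
      Deriv Φ (.lab b ρ A)

/-- Satisfaction of generic formulas in a structure `⟨M, I⟩`, where `M` is given
by the valuation `V` and `I : L → ℕ` interprets labels. -/
def GSat {P : Type} (V : ℕ → P → Prop) (I : ℕ → ℕ) : GenForm P → Prop
  | .lab b ρ A => NablaSat V A (I b) (ρ.map I)
  | .le b c => I b ≤ I c
  | .lt b c => I c = I b + 1

/-! ## The Hilbert system H(LTL) -/

/-- Propositional evaluation of an LTL-formula with respect to a valuation `v` on
formulas, treating atoms and formulas with outermost `G`, `X`, `U` as propositional
atoms. `A` is an instance of a propositional tautology iff `propEval v A` for all `v`. -/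
def propEval {P : Type} (v : LTLFormula P → Prop) : LTLFormula P → Prop
  | .atom p => v (.atom p)
  | .bot => False
  | .imp A B => propEval v A → propEval v B
  | .G A => v (.G A)
  | .X A => v (.X A)
  | .U A B => v (.U A B)

/-- Theorems of the Hilbert axiomatization H(LTL). -/
inductive HLTL {P : Type} : LTLFormula P → Prop
  | taut {A : LTLFormula P} : (∀ v : LTLFormula P → Prop, propEval v A) → HLTL A
  | a2 {A B : LTLFormula P} : HLTL (.imp (.G (.imp A B)) (.imp (.G A) (.G B)))
  | a3 {A : LTLFormula P} : HLTL (LTLFormula.iff (.X A.neg) (LTLFormula.X A).neg)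
  | a4 {A B : LTLFormula P} : HLTL (.imp (.X (.imp A B)) (.imp (.X A) (.X B)))
  | a5 {A : LTLFormula P} : HLTL (.imp (.G A) (LTLFormula.and A (.X (.G A))))
  | a6 {A : LTLFormula P} : HLTL (.imp (.G (.imp A (.X A))) (.imp A (.G A)))
  | a7 {A B : LTLFormula P} :
      HLTL (LTLFormula.iff (.U A B) (LTLFormula.or B (LTLFormula.and A (.X (.U A B)))))
  | a8 {A B : LTLFormula P} : HLTL (.imp (.U A B) (LTLFormula.F B))
  | mp {A B : LTLFormula P} : HLTL (.imp A B) → HLTL A → HLTL B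
  | necX {A : LTLFormula P} : HLTL A → HLTL (.X A)
  | necG {A : LTLFormula P} : HLTL A → HLTL (.G A)

/-! ## Auxiliary lemmas for soundness -/

section Soundness
variable {P : Type}

lemma map_update_notmem (I : ℕ → ℕ) (x v : ℕ) {ρ : List ℕ} (h : x ∉ ρ) :
    ρ.map (Function.update I x v) = ρ.map I :=
  List.map_congr_left fun a ha => Function.update_of_ne (by rintro rfl; exact h ha) _ _

lemma gsat_update (V : ℕ → P → Prop) (I : ℕ → ℕ) (x v : ℕ) {φ : GenForm P}
    (h : x ∉ φ.labels) : GSat V (Function.update I x v) φ ↔ GSat V I φ := by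
  cases φ with
  | lab b ρ A =>
      simp only [GenForm.labels, Set.mem_insert_iff, Set.mem_setOf_eq, not_or] at h
      simp only [GSat]
      rw [Function.update_of_ne (Ne.symm h.1), map_update_notmem I x v h.2]
  | le b c =>
      simp only [GenForm.labels, Set.mem_insert_iff, Set.mem_singleton_iff, not_or] at h
      simp only [GSat]
      rw [Function.update_of_ne (Ne.symm h.1), Function.update_of_ne (Ne.symm h.2)]
  | lt b c =>
      simp only [GenForm.labels, Set.mem_insert_iff, Set.mem_singleton_iff, not_or] at h
      simp only [GSat]
      rw [Function.update_of_ne (Ne.symm h.1), Function.update_of_ne (Ne.symm h.2)]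

lemma gsat_subst (V : ℕ → P → Prop) (I : ℕ → ℕ) (b c : ℕ) (φ : GenForm P) :
    GSat V I (φ.subst b c) ↔ GSat V (Function.update I b (I c)) φ := by
  have key : ∀ d, I (if d = b then c else d) = Function.update I b (I c) d := by
    intro d; by_cases hd : d = b <;> simp [hd, Function.update]
  cases φ with
  | lab d ρ A =>
      simp only [GenForm.subst, GSat, List.map_map, key]
      rw [show (I ∘ fun x => if x = b then c else x) = Function.update I b (I c) from
        funext key]
  | le d e => simp only [GenForm.subst, GSat, key]
  | lt d e => simp only [GenForm.subst, GSat, key]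

lemma indep (V : ℕ → P → Prop) :
    ∀ A : NablaFormula P,
      (IsLocal A → ∀ n (ρ ρ' : List ℕ), NablaSat V A n ρ ↔ NablaSat V A n ρ') ∧
      (IsHist A → ∀ n h (ρ ρ' : List ℕ),
        NablaSat V A n (h :: ρ) ↔ NablaSat V A n (h :: ρ')) := by
  intro A
  induction A with
  | atom p => exact ⟨fun _ _ _ _ => Iff.rfl, fun _ _ _ _ _ => Iff.rfl⟩
  | bot => exact ⟨fun _ _ _ _ => Iff.rfl, fun _ _ _ _ _ => Iff.rfl⟩
  | imp A B ihA ihB =>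
      refine ⟨?_, ?_⟩
      · intro hl n ρ ρ'
        cases hl with
        | imp hA hB =>
            exact imp_congr (ihA.1 hA n ρ ρ') (ihB.1 hB n ρ ρ')
      · intro hh n h ρ ρ'
        cases hh with
        | ofLocal hl =>
            cases hl with
            | imp hA hB => exact imp_congr (ihA.1 hA n _ _) (ihB.1 hB n _ _)
        | imp hA hB => exact imp_congr (ihA.2 hA n h ρ ρ') (ihB.2 hB n h ρ ρ')
  | G A ihA =>
      have hloc : IsLocal (.G A) → ∀ n (ρ ρ' : List ℕ),
          NablaSat V (.G A) n ρ ↔ NablaSat V (.G A) n ρ' := by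
        intro hl n ρ ρ'
        cases hl with
        | G hA =>
            exact forall_congr' fun m => imp_congr Iff.rfl (ihA.2 hA m n ρ ρ')
      refine ⟨hloc, ?_⟩
      intro hh n h ρ ρ'
      cases hh with
      | ofLocal hl => exact hloc hl n _ _
  | X A ihA =>
      have hloc : IsLocal (.X A) → ∀ n (ρ ρ' : List ℕ),
          NablaSat V (.X A) n ρ ↔ NablaSat V (.X A) n ρ' := by
        intro hl n ρ ρ'
        cases hl with
        | X hA => exact ihA.2 hA (n+1) n ρ ρ'
      refine ⟨hloc, ?_⟩
      intro hh n h ρ ρ'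
      cases hh with
      | ofLocal hl => exact hloc hl n _ _
  | nabla A ihA =>
      refine ⟨?_, ?_⟩
      · intro hl; cases hl
      · intro hh n h ρ ρ'
        cases hh with
        | ofLocal hl => cases hl
        | nabla hA =>
            exact forall_congr' fun m =>
              imp_congr Iff.rfl (imp_congr Iff.rfl (ihA.2 hA m h ρ ρ'))

lemma nablaSat_or (V : ℕ → P → Prop) (A B : NablaFormula P) (n : ℕ) (ρ : List ℕ) :
    NablaSat V (A.or B) n ρ ↔ NablaSat V A n ρ ∨ NablaSat V B n ρ := by
  simp only [NablaFormula.or, NablaFormula.neg, NablaSat]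
  tauto

lemma nablaSat_and (V : ℕ → P → Prop) (A B : NablaFormula P) (n : ℕ) (ρ : List ℕ) :
    NablaSat V (A.and B) n ρ ↔ NablaSat V A n ρ ∧ NablaSat V B n ρ := by
  simp only [NablaFormula.and, NablaFormula.or, NablaFormula.neg, NablaSat]
  tauto

lemma nablaSat_F (V : ℕ → P → Prop) (A : NablaFormula P) (n : ℕ) (ρ : List ℕ) :
    NablaSat V A.F n ρ ↔ ∃ m, n ≤ m ∧ NablaSat V A m (n :: ρ) := by
  simp only [NablaFormula.F, NablaFormula.neg, NablaSat]
  constructor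
  · intro h
    by_contra hc
    push_neg at hc
    exact h fun m hm hA => hc m hm hA
  · rintro ⟨m, hm, hA⟩ h
    exact h m hm hA

lemma trNabla_sat (V : ℕ → P → Prop) :
    ∀ (A : LTLFormula P) (n : ℕ) (ρ : List ℕ),
      NablaSat V (trNabla A) n ρ ↔ LTLSat V A n := by
  intro A
  induction A with
  | atom p => intro n ρ; exact Iff.rfl
  | bot => intro n ρ; exact Iff.rfl
  | imp A B ihA ihB => intro n ρ; exact imp_congr (ihA n ρ) (ihB n ρ)
  | G A ih =>
      intro n ρ
      exact forall_congr' fun m => imp_congr Iff.rfl (ih m _)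
  | X A ih => intro n ρ; exact ih (n+1) _
  | U A B ihA ihB =>
      intro n ρ
      have lhs : NablaSat V (trNabla (.U A B)) n ρ ↔
          (LTLSat V B n ∨ ∃ m, n ≤ m ∧ (LTLSat V B (m+1) ∧
            ∀ k, n ≤ k → k ≤ m → LTLSat V A k)) := by
        simp only [trNabla]
        rw [nablaSat_or, nablaSat_F]
        refine or_congr (ihB n ρ) (exists_congr fun m => and_congr Iff.rfl ?_)
        rw [nablaSat_and]
        exact and_congr (ihB (m+1) (m :: n :: ρ))
          (forall_congr' fun k => imp_congr Iff.rfl (imp_congr Iff.rfl (ihA k (n :: ρ))))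
      rw [lhs]
      show _ ↔ (∃ n', n ≤ n' ∧ LTLSat V B n' ∧ ∀ m, n ≤ m → m < n' → LTLSat V A m)
      constructor
      · rintro (hB | ⟨m, hm, hB, hA⟩)
        · exact ⟨n, le_refl n, hB, fun k h1 h2 => absurd h1 (by omega)⟩
        · exact ⟨m+1, by omega, hB, fun k h1 h2 => hA k h1 (by omega)⟩
      · rintro ⟨n', h1, hB, hA⟩
        rcases eq_or_lt_of_le h1 with rfl | h2
        · exact Or.inl hB
        · exact Or.inr ⟨n'-1, by omega, by rwa [show n'-1+1 = n' by omega],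
            fun k hk1 hk2 => hA k hk1 (by omega)⟩

end Soundness
section DerivSound
variable {P : Type}

lemma deriv_sound (V : ℕ → P → Prop) {Φ : Set (GenForm P)} {φ : GenForm P}
    (h : Deriv Φ φ) : ∀ I : ℕ → ℕ, (∀ ψ ∈ Φ, GSat V I ψ) → GSat V I φ := by
  induction h with
  | assume hmem => exact fun I hI => hI _ hmem
  | @botE Φ b₁ b₂ ρ₁ ρ₂ A h ih =>
      intro I hI
      by_contra hc
      exact ih I (by
        rintro ψ (rfl | hψ)
        · exact fun hA => hc hA
        · exact hI ψ hψ)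
  | @impI Φ b ρ A B h ih =>
      intro I hI hA
      exact ih I (by
        rintro ψ (rfl | hψ)
        · exact hA
        · exact hI ψ hψ)
  | impE h1 h2 ih1 ih2 => exact fun I hI => ih1 I hI (ih2 I hI)
  | @GI Φ b₁ b₂ ρ A h hne hnotmem hfresh ih =>
      intro I hI m hm
      have key := ih (Function.update I b₂ m) (by
        rintro ψ (rfl | hψ)
        · show Function.update I b₂ m b₁ ≤ Function.update I b₂ m b₂
          rw [Function.update_self, Function.update_of_ne (Ne.symm hne)]
          exact hm
        · exact (gsat_update V I b₂ m (hfresh ψ hψ)).mpr (hI ψ hψ))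
      simp only [GSat, List.map_cons] at key
      rwa [Function.update_self, Function.update_of_ne (Ne.symm hne),
        map_update_notmem I b₂ m hnotmem] at key
  | GE h1 h2 ih1 ih2 => exact fun I hI => ih1 I hI _ (ih2 I hI)
  | @XI Φ b₁ b₂ ρ A h hne hnotmem hfresh ih =>
      intro I hI
      have key := ih (Function.update I b₂ (I b₁ + 1)) (by
        rintro ψ (rfl | hψ)
        · show Function.update I b₂ (I b₁ + 1) b₂ = Function.update I b₂ (I b₁ + 1) b₁ + 1
          rw [Function.update_self, Function.update_of_ne (Ne.symm hne)]
        · exact (gsat_update V I b₂ _ (hfresh ψ hψ)).mpr (hI ψ hψ))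
      simp only [GSat, List.map_cons] at key
      rwa [Function.update_self, Function.update_of_ne (Ne.symm hne),
        map_update_notmem I b₂ _ hnotmem] at key
  | @XE Φ b₁ b₂ ρ A h1 h2 ih1 ih2 =>
      intro I hI
      have hx := ih1 I hI
      have he : I b₂ = I b₁ + 1 := ih2 I hI
      show NablaSat V A (I b₂) (I b₁ :: ρ.map I)
      rw [he]
      exact hx
  | @nablaI Φ b₁ b₂ b₃ ρ A h hne1 hne3 hnotmem hfresh ih =>
      intro I hI m h1 h2
      have key := ih (Function.update I b₂ m) (by
        rintro ψ (rfl | rfl | hψ)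
        · show Function.update I b₂ m b₁ ≤ Function.update I b₂ m b₂
          rw [Function.update_self, Function.update_of_ne (Ne.symm hne1)]
          exact h1
        · show Function.update I b₂ m b₂ ≤ Function.update I b₂ m b₃
          rw [Function.update_self, Function.update_of_ne (Ne.symm hne3)]
          exact h2
        · exact (gsat_update V I b₂ m (hfresh ψ hψ)).mpr (hI ψ hψ))
      simp only [GSat, List.map_cons] at key
      rwa [Function.update_self, Function.update_of_ne (Ne.symm hne1),
        map_update_notmem I b₂ m hnotmem] at key
  | nablaE h h1 h2 ih ih1 ih2 =>
      exact fun I hI => ih I hI _ (ih1 I hI) (ih2 I hI)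
  | @last Φ b ρ ρ' A h hloc ih =>
      intro I hI
      exact ((indep V A).1 hloc (I b) (ρ'.map I) (ρ.map I)).mp (ih I hI)
  | @serLt Φ b₁ b₂ b ρ A h hne1 hne hnotmem hfresh ih =>
      intro I hI
      have key := ih (Function.update I b₂ (I b₁ + 1)) (by
        rintro ψ (rfl | hψ)
        · show Function.update I b₂ (I b₁ + 1) b₂ = Function.update I b₂ (I b₁ + 1) b₁ + 1
          rw [Function.update_self, Function.update_of_ne (Ne.symm hne1)]
        · exact (gsat_update V I b₂ _ (hfresh ψ hψ)).mpr (hI ψ hψ))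
      simp only [GSat] at key ⊢
      rwa [Function.update_of_ne (Ne.symm hne), map_update_notmem I b₂ _ hnotmem] at key
  | @linLt Φ b₁ b₂ b₃ φ b ρ A h1 h2 h3 h4 ih1 ih2 ih3 ih4 =>
      intro I hI
      have e2 : I b₂ = I b₁ + 1 := ih1 I hI
      have e3 : I b₃ = I b₁ + 1 := ih2 I hI
      have e : I b₂ = I b₃ := by omega
      refine ih4 I (by
        rintro ψ (rfl | hψ)
        · rw [gsat_subst, show I b₃ = I b₂ from e.symm, Function.update_eq_self]
          exact ih3 I hI
        · exact hI ψ hψ)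
  | @reflLe Φ b₁ b ρ A h ih =>
      intro I hI
      exact ih I (by
        rintro ψ (rfl | hψ)
        · exact le_refl (I b₁)
        · exact hI ψ hψ)
  | transLe h1 h2 h3 ih1 ih2 ih3 =>
      intro I hI
      exact ih3 I (by
        rintro ψ (rfl | hψ)
        · exact le_trans (ih1 I hI) (ih2 I hI)
        · exact hI ψ hψ)
  | @eqLe Φ b₁ b₂ ρ A h1 h2 h3 ih1 ih2 ih3 =>
      intro I hI
      have e : I b₁ = I b₂ := le_antisymm (ih1 I hI) (ih2 I hI)
      show NablaSat V A (I b₂) (ρ.map I)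
      rw [← e]
      exact ih3 I hI
  | @splitLe Φ b₁ b₂ b' φ b ρ A h1 h2 h3 h4 hne1 hne2 hne hnotmem hfresh ih1 ih2 ih3 ih4 =>
      intro I hI
      have hle : I b₁ ≤ I b₂ := ih1 I hI
      rcases eq_or_lt_of_le hle with heq | hlt
      · exact ih3 I (by
          rintro ψ (rfl | hψ)
          · rw [gsat_subst, show I b₂ = I b₁ from heq.symm, Function.update_eq_self]
            exact ih2 I hI
          · exact hI ψ hψ)
      · have key := ih4 (Function.update I b' (I b₁ + 1)) (by
          rintro ψ (rfl | rfl | hψ)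
          · show Function.update I b' (I b₁ + 1) b' = Function.update I b' (I b₁ + 1) b₁ + 1
            rw [Function.update_self, Function.update_of_ne (Ne.symm hne1)]
          · show Function.update I b' (I b₁ + 1) b' ≤ Function.update I b' (I b₁ + 1) b₂
            rw [Function.update_self, Function.update_of_ne (Ne.symm hne2)]
            omega
          · exact (gsat_update V I b' _ (hfresh ψ hψ)).mpr (hI ψ hψ))
        simp only [GSat] at key ⊢
        rwa [Function.update_of_ne (Ne.symm hne), map_update_notmem I b' _ hnotmem] at key
  | @baseLe Φ b₁ b₂ b ρ A h1 h2 ih1 ih2 =>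
      intro I hI
      have e : I b₂ = I b₁ + 1 := ih1 I hI
      exact ih2 I (by
        rintro ψ (rfl | hψ)
        · show I b₁ ≤ I b₂; omega
        · exact hI ψ hψ)
  | @ind Φ b₀ b bi bj ρ A h0 hle hstep hij hib hi0 hiρ hifresh hjb hj0 hjρ hjfresh
      ih0 ihle ihstep =>
      intro I hI
      have hbase : NablaSat V A (I b₀) (ρ.map I) := ih0 I hI
      have hb0b : I b₀ ≤ I b := ihle I hI
      have step : ∀ n, I b₀ ≤ n → NablaSat V A n (ρ.map I) →
          NablaSat V A (n+1) (ρ.map I) := by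
        intro n hn hA
        set I' := Function.update (Function.update I bi n) bj (n+1) with hI'def
        have e_bi : I' bi = n := by
          rw [hI'def, Function.update_of_ne hij, Function.update_self]
        have e_bj : I' bj = n + 1 := by rw [hI'def, Function.update_self]
        have e_b0 : I' b₀ = I b₀ := by
          rw [hI'def, Function.update_of_ne (Ne.symm hj0), Function.update_of_ne (Ne.symm hi0)]
        have e_ρ : ρ.map I' = ρ.map I := by
          rw [hI'def, map_update_notmem _ _ _ hjρ, map_update_notmem _ _ _ hiρ]
        have key := ihstep I' (by
          rintro ψ (rfl | rfl | rfl | hψ)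
          · show I' b₀ ≤ I' bi
            rw [e_b0, e_bi]; exact hn
          · show I' bj = I' bi + 1
            rw [e_bi, e_bj]
          · show NablaSat V A (I' bi) (ρ.map I')
            rw [e_bi, e_ρ]; exact hA
          · exact (gsat_update V _ bj (n+1) (hjfresh ψ hψ)).mpr
              ((gsat_update V I bi n (hifresh ψ hψ)).mpr (hI ψ hψ)))
        simp only [GSat] at key
        rwa [e_bj, e_ρ] at key
      have main : ∀ k, NablaSat V A (I b₀ + k) (ρ.map I) := by
        intro k
        induction k with
        | zero => rw [Nat.add_zero]; exact hbase
        | succ k ihk =>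
            have hs := step (I b₀ + k) (by omega) ihk
            rw [show I b₀ + (k+1) = (I b₀ + k) + 1 by omega]
            exact hs
      show NablaSat V A (I b) (ρ.map I)
      rw [show I b = I b₀ + (I b - I b₀) by omega]
      exact main _

end DerivSound
/-- Soundness of N(LTL∇) w.r.t. LTL.
If `Λ ⊢LTL A` — i.e. there is a label `b` and an N(LTL∇)-derivation of `b:A*`
whose open assumptions are all of the form `b:B*` with `B ∈ Λ` — then `Λ ⊨LTL A`. -/
theorem ltl_soundness {P : Type} (Λ : Set (LTLFormula P)) (A : LTLFormula P)
    (h : ∃ b : ℕ,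
      Deriv {ψ : GenForm P | ∃ B ∈ Λ, ψ = .lab b ([] : List ℕ) (trNabla B)}
        (.lab b ([] : List ℕ) (trNabla A))) :
    ∀ V : ℕ → P → Prop, (∀ B ∈ Λ, ∀ n : ℕ, LTLSat V B n) → ∀ n : ℕ, LTLSat V A n := by
  obtain ⟨b, hd⟩ := h
  intro V hΛ n
  have key := deriv_sound V hd (fun _ => n) (by
    rintro ψ ⟨B, hB, rfl⟩
    show NablaSat V (trNabla B) n (([] : List ℕ).map _)
    exact (trNabla_sat V B n _).mpr (hΛ B hB n))
  exact (trNabla_sat V A n _).mp key
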